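/- arXiv:2310.14770 — 4 statements merged into one kernel-verified Lean document; each statement's English description precedes it below -/
import Mathlib

section
/- Theorem (H-consistency bound for cross-entropy score-based surrogates, conditional form, case μ ∈ [1,2)). For every μ ∈ [1,2), every conditional probability vector p, and every score vector v ∈ ℝ^{n+1}, the abstention calibration gap is bounded by the surrogate calibration gap as ΔC_abs(v,p) ≤ sqrt( 2 · (2 − c) · (n+1)^{μ−1} · ΔC_μ(v,p) ). In particular, for the logistic (cross-entropy) case μ = 1 this reads ΔC_abs(v,p) ≤ sqrt(2(2−c) ΔC_1(v,p)). This is the conditional form, over a symmetric and complete hypothesis set, of the H-consistency bound with Γ_μ(t) = sqrt(2(2−c)(n+1)^{μ−1} t). -/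
/- Setting: `n = m + 1 ≥ 2` classes (indices `0, …, m` of `Fin (m+2)` via `castSucc`), the
abstention label is `Fin.last (m+1)`, and `c ∈ (0,1)` is the abstention cost. -/

/-- Maximum of the class scores. -/
noncomputable def classMax (m : ℕ) (v : Fin (m + 2) → ℝ) : ℝ :=
  Finset.univ.sup' Finset.univ_nonempty (fun i : Fin (m + 1) => v i.castSucc)

/-- The prediction `𝗁(v)` of a score vector: the abstention label `Fin.last (m+1)` if its score
is at least the maximal class score, and otherwise the smallest class index achieving the
maximal class score (deterministic tie-breaking). -/
noncomputable def pred (m : ℕ) (v : Fin (m + 2) → ℝ) : Fin (m + 2) :=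
  if classMax m v ≤ v (Fin.last (m + 1)) then Fin.last (m + 1)
  else Fin.castSucc <|
    (Finset.univ.filter fun i : Fin (m + 1) => v i.castSucc = classMax m v).min'
      (by
        obtain ⟨b, -, hb⟩ :=
          Finset.exists_mem_eq_sup' (Finset.univ_nonempty (α := Fin (m + 1)))
            (fun i : Fin (m + 1) => v i.castSucc)
        exact ⟨b, Finset.mem_filter.mpr ⟨Finset.mem_univ b, hb.symm⟩⟩)

/-- Extension of a conditional probability vector by `p (n+1) := 1 - c`. -/
noncomputable def pext (m : ℕ) (c : ℝ) (p : Fin (m + 1) → ℝ) : Fin (m + 2) → ℝ :=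
  Fin.snoc p (1 - c)

/-- Conditional abstention risk `C_abs(v, p) = 1 - p(𝗁(v))`. -/
noncomputable def condAbsRisk (m : ℕ) (c : ℝ) (p : Fin (m + 1) → ℝ)
    (v : Fin (m + 2) → ℝ) : ℝ :=
  1 - pext m c p (pred m v)

/-- The cross-entropy family of losses `ℓ_μ` (logistic loss at `μ = 1`, generalized
cross-entropy for `μ ∈ (1,2)`, mean absolute error at `μ = 2`). -/
noncomputable def ellmu (m : ℕ) (μ : ℝ) (v : Fin (m + 2) → ℝ) (y : Fin (m + 2)) : ℝ :=
  if μ = 1 then Real.log (∑ y', Real.exp (v y' - v y))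
  else (1 / (1 - μ)) * ((∑ y', Real.exp (v y' - v y)) ^ (1 - μ) - 1)

/-- Conditional risk of the cross-entropy score-based surrogate
`C_μ(v, p) = Σ_{y=1}^{n+1} p(y) ℓ_μ(v, y)`, with `p(n+1) = 1 - c`. -/
noncomputable def condSurRisk (m : ℕ) (μ c : ℝ) (p : Fin (m + 1) → ℝ)
    (v : Fin (m + 2) → ℝ) : ℝ :=
  ∑ y, pext m c p y * ellmu m μ v y

/-!
Let `y*` maximise `p`, `ĥ = 𝗁(v)`, `α = p(y*)` and `β = p(ĥ)`; the abstention gap is at most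
`α - β`. Write `ℓ_μ(v, y) = φ_μ(softmax v y)`. Redistributing the softmax mass `s` of `ĥ` and `y*`
in the proportions `β : α` lowers the surrogate risk by at least `s^(μ-1) (α - β)² / (2(α + β))`,
and `s ≥ 1/(n+1)` because `ĥ` has the largest score. After normalisation this is the two-point
inequality `r (φ(y) - φ(r)) + (1 - r)(φ(1 - y) - φ(1 - r)) ≥ 2 (r - 1/2)²` for `y ≤ 1/2 ≤ r`:
the left side decreases in `y`, and at `y = 1/2` its second derivative in `r` is
`μ (r^(μ-2) + (1 - r)^(μ-2)) ≥ 4` by AM-GM and `2^(μ-1) ≤ μ`. Finally `α + β ≤ 2 - c`.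
-/

open Real Set

lemma monotoneOn_of_hasDerivAt_nonneg {D : Set ℝ} (hD : Convex ℝ D) {f f' : ℝ → ℝ}
    (hf : ∀ x ∈ D, HasDerivAt f (f' x) x) (hf' : ∀ x ∈ interior D, 0 ≤ f' x) :
    MonotoneOn f D :=
  monotoneOn_of_hasDerivWithinAt_nonneg hD
    (fun x hx => (hf x hx).continuousAt.continuousWithinAt)
    (fun x hx => (hf x (interior_subset hx)).hasDerivWithinAt) hf'

lemma antitoneOn_of_hasDerivAt_nonpos {D : Set ℝ} (hD : Convex ℝ D) {f f' : ℝ → ℝ}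
    (hf : ∀ x ∈ D, HasDerivAt f (f' x) x) (hf' : ∀ x ∈ interior D, f' x ≤ 0) :
    AntitoneOn f D :=
  antitoneOn_of_hasDerivWithinAt_nonpos hD
    (fun x hx => (hf x hx).continuousAt.continuousWithinAt)
    (fun x hx => (hf x (interior_subset hx)).hasDerivWithinAt) hf'

/-- `ℓ_μ(v, y) = phi μ (softmax v y)`. The derivative is `-x ^ (μ - 2)` for every `μ`, which lets
the cases `μ = 1` and `μ > 1` be handled together. -/
noncomputable def phi (μ x : ℝ) : ℝ :=
  if μ = 1 then -log x else (1 - x ^ (μ - 1)) / (μ - 1)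

section phi

variable {x : ℝ}

lemma hasDerivAt_phi (μ : ℝ) (hx : 0 < x) : HasDerivAt (phi μ) (-x ^ (μ - 2)) x := by
  by_cases hμ : μ = 1
  · have hphi : phi μ = fun x => -log x := funext fun x => if_pos hμ
    rw [hphi, hμ, show (1 : ℝ) - 2 = -1 by norm_num, rpow_neg_one]
    exact (hasDerivAt_log hx.ne').neg
  · have hphi : phi μ = fun x => (1 - x ^ (μ - 1)) / (μ - 1) := funext fun x => if_neg hμ
    rw [hphi]
    refine (((hasDerivAt_rpow_const (Or.inl hx.ne')).const_sub 1).div_const (μ - 1)).congr_deriv ?_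
    field_simp [sub_ne_zero.mpr hμ]
    ring_nf

lemma phi_one (μ : ℝ) : phi μ 1 = 0 := by
  simp [phi]

lemma phi_antitoneOn (μ : ℝ) : AntitoneOn (phi μ) (Ioi 0) :=
  antitoneOn_of_hasDerivAt_nonpos (convex_Ioi 0) (fun _ hx => hasDerivAt_phi μ hx)
    fun x hx => by
      rw [interior_Ioi] at hx
      exact neg_nonpos.mpr (rpow_nonneg (le_of_lt hx) _)

lemma phi_mul_sub_phi_mul {μ s y : ℝ} (hs : 0 < s) (hx : 0 < x) (hy : 0 < y) :
    phi μ (s * x) - phi μ (s * y) = s ^ (μ - 1) * (phi μ x - phi μ y) := by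
  unfold phi
  split_ifs with hμ
  · rw [hμ, sub_self, rpow_zero, log_mul hs.ne' hx.ne', log_mul hs.ne' hy.ne']
    ring
  · rw [mul_rpow hs.le hx.le, mul_rpow hs.le hy.le]
    field_simp [sub_ne_zero.mpr hμ]
    ring

lemma hasDerivAt_mul_phi (μ : ℝ) (hx : 0 < x) :
    HasDerivAt (fun x => x * phi μ x) (phi μ x - x ^ (μ - 1)) x := by
  refine ((hasDerivAt_id' x).mul (hasDerivAt_phi μ hx)).congr_deriv ?_
  rw [show μ - 1 = μ - 2 + 1 by ring, rpow_add_one hx.ne']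
  ring

lemma hasDerivAt_phi_sub_rpow (μ : ℝ) (hx : 0 < x) :
    HasDerivAt (fun x => phi μ x - x ^ (μ - 1)) (-(μ * x ^ (μ - 2))) x := by
  refine ((hasDerivAt_phi μ hx).sub (hasDerivAt_rpow_const (Or.inl hx.ne'))).congr_deriv ?_
  ring_nf

lemma four_le_mul_rpow_add_rpow {μ : ℝ} (hμ1 : 1 ≤ μ) (hμ2 : μ ≤ 2) (hx0 : 0 < x) (hx1 : x < 1) :
    4 ≤ μ * (x ^ (μ - 2) + (1 - x) ^ (μ - 2)) := by
  have hx1' : 0 < 1 - x := sub_pos.mpr hx1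
  set g : ℝ := 2 ^ (μ - 2) with hg
  have hg0 : 0 < g := rpow_pos_of_pos two_pos _
  have hμg : 2 * g ≤ μ := by
    have := rpow_one_add_le_one_add_mul_self (s := 1) (by norm_num) (p := μ - 1)
      (by linarith) (by linarith)
    rw [one_add_one_eq_two, show μ - 1 = μ - 2 + 1 by ring, rpow_add_one two_ne_zero] at this
    linarith
  have hprod : 1 ≤ x ^ (μ - 2) * (1 - x) ^ (μ - 2) * g ^ 2 := by
    have h4 : (1 / 4 : ℝ) ^ (μ - 2) ≤ (x * (1 - x)) ^ (μ - 2) :=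
      rpow_le_rpow_of_nonpos (by positivity) (by nlinarith [sq_nonneg (x - 1 / 2)])
        (by linarith)
    have hg2 : (1 / 4 : ℝ) ^ (μ - 2) * g ^ 2 = 1 := by
      rw [hg, sq, ← mul_rpow, ← mul_rpow] <;> norm_num
    rw [← mul_rpow hx0.le hx1'.le]
    nlinarith
  have hA := rpow_pos_of_pos hx0 (μ - 2)
  have hB := rpow_pos_of_pos hx1' (μ - 2)
  have hsq : 2 ^ 2 ≤ (g * (x ^ (μ - 2) + (1 - x) ^ (μ - 2))) ^ 2 := by
    nlinarith [sq_nonneg (x ^ (μ - 2) - (1 - x) ^ (μ - 2)), sq_nonneg g]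
  have h2 : 2 ≤ g * (x ^ (μ - 2) + (1 - x) ^ (μ - 2)) :=
    (pow_le_pow_iff_left₀ zero_le_two (by positivity) two_ne_zero).mp hsq
  nlinarith

lemma two_mul_sq_le_phi_half_sub_entropy {μ : ℝ} (hμ1 : 1 ≤ μ) (hμ2 : μ ≤ 2) {r : ℝ} (hr : 1 / 2 ≤ r)
    (hr1 : r < 1) :
    2 * (r - 1 / 2) ^ 2 ≤ phi μ (1 / 2) - r * phi μ r - (1 - r) * phi μ (1 - r) := by
  set g := fun x => phi μ x - x ^ (μ - 1)
  have hg : ∀ x, 0 < x → HasDerivAt g (-(μ * x ^ (μ - 2))) x := fun x hx =>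
    hasDerivAt_phi_sub_rpow μ hx
  have hk : MonotoneOn (fun r => g (1 - r) - g r - 4 * r) (Ico (1 / 2) 1) := by
    refine monotoneOn_of_hasDerivAt_nonneg (convex_Ico _ _)
      (f' := fun r => μ * (1 - r) ^ (μ - 2) + μ * r ^ (μ - 2) - 4) (fun r hr => ?_)
      (fun r hr => ?_)
    · exact ((((hg (1 - r) (by linarith [hr.2])).comp_const_sub 1 r).sub
        (hg r (by linarith [hr.1]))).sub ((hasDerivAt_id r).const_mul 4)).congr_deriv (by ring)
    · rw [interior_Ico] at hr
      have := four_le_mul_rpow_add_rpow hμ1 hμ2 (x := r) (by linarith [hr.1]) hr.2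
      linarith
  have hh : MonotoneOn (fun r => -(r * phi μ r) - (1 - r) * phi μ (1 - r) - 2 * (r - 1 / 2) ^ 2)
      (Ico (1 / 2) 1) := by
    refine monotoneOn_of_hasDerivAt_nonneg (convex_Ico _ _)
      (f' := fun r => g (1 - r) - g r - 4 * r + 2) (fun r hr => ?_) (fun r hr => ?_)
    · have hsq : HasDerivAt (fun r : ℝ => 2 * (r - 1 / 2) ^ 2) (4 * r - 2) r :=
        (((hasDerivAt_id r).sub_const (1 / 2)).pow 2 |>.const_mul 2).congr_deriv (by simp; ring)
      refine (((hasDerivAt_mul_phi μ (by linarith [hr.1] : 0 < r)).neg.sub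
        ((hasDerivAt_mul_phi μ (by linarith [hr.2] : 0 < 1 - r)).comp_const_sub 1 r)).sub
        hsq).congr_deriv (by simp only [g]; ring)
    · rw [interior_Ico] at hr
      have := hk (left_mem_Ico.2 (by norm_num)) (Ioo_subset_Ico_self hr) hr.1.le
      norm_num at this ⊢
      linarith
  have := hh (left_mem_Ico.2 (by norm_num)) ⟨hr, hr1⟩ hr
  norm_num at this ⊢
  linarith

lemma antitoneOn_two_point_phi {μ : ℝ} (hμ2 : μ ≤ 2) {r : ℝ} (hr : 1 / 2 ≤ r) (hr1 : r ≤ 1) :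
    AntitoneOn (fun y => (1 - r) * phi μ (1 - y) + r * phi μ y) (Ioc 0 (1 / 2)) := by
  refine antitoneOn_of_hasDerivAt_nonpos (convex_Ioc _ _)
    (f' := fun y => (1 - r) * (1 - y) ^ (μ - 2) - r * y ^ (μ - 2)) (fun y hy => ?_)
    (fun y hy => ?_)
  · exact ((((hasDerivAt_phi μ (by linarith [hy.2])).comp_const_sub 1 y).const_mul _).add
      ((hasDerivAt_phi μ hy.1).const_mul _)).congr_deriv (by ring)
  · rw [interior_Ioc] at hy
    have hpow : (1 - y) ^ (μ - 2) ≤ y ^ (μ - 2) :=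
      rpow_le_rpow_of_nonpos hy.1 (by linarith [hy.2]) (by linarith)
    have hy0 := rpow_nonneg hy.1.le (μ - 2)
    have hr0 : 0 ≤ 1 - r := by linarith
    nlinarith

lemma two_mul_sq_le_two_point_phi {μ : ℝ} (hμ1 : 1 ≤ μ) (hμ2 : μ ≤ 2) {r y : ℝ} (hy0 : 0 < y)
    (hy : y ≤ 1 / 2) (hr : 1 / 2 ≤ r) (hr1 : r < 1) :
    2 * (r - 1 / 2) ^ 2 ≤ (1 - r) * (phi μ (1 - y) - phi μ (1 - r)) + r * (phi μ y - phi μ r) := by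
  have hy := antitoneOn_two_point_phi hμ2 hr hr1.le ⟨hy0, hy⟩ (right_mem_Ioc.2 one_half_pos) hy
  have hr := two_mul_sq_le_phi_half_sub_entropy hμ1 hμ2 hr hr1
  norm_num at hy hr ⊢
  linarith

lemma sq_sub_le_phi_reallocation {μ : ℝ} (hμ1 : 1 ≤ μ) (hμ2 : μ ≤ 2) {a b α β : ℝ} (hb : 0 < b)
    (hba : b ≤ a) (hβ : 0 < β) (hβα : β ≤ α) :
    (a + b) ^ (μ - 1) * (α - β) ^ 2 ≤ 2 * (α + β) *
      (β * (phi μ a - phi μ ((a + b) * β / (α + β))) +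
        α * (phi μ b - phi μ ((a + b) * α / (α + β)))) := by
  set s := a + b
  set σ := α + β
  have hs : 0 < s := by linarith
  have hσ : 0 < σ := by linarith
  have hbs : b / s < 1 := by rw [div_lt_one hs]; linarith
  have hασ : α / σ < 1 := by rw [div_lt_one hσ]; linarith
  have key := two_mul_sq_le_two_point_phi hμ1 hμ2 (r := α / σ) (y := b / s) (div_pos hb hs)
    (by rw [div_le_iff₀ hs]; linarith) (by rw [le_div_iff₀ hσ]; linarith)
    hασ
  have ea : phi μ a - phi μ (s * β / σ) = s ^ (μ - 1) * (phi μ (1 - b / s) - phi μ (1 - α / σ)) := by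
    rw [← phi_mul_sub_phi_mul hs (sub_pos.2 hbs) (sub_pos.2 hασ)]
    congr 2 <;> field_simp <;> ring
  have eb : phi μ b - phi μ (s * α / σ) = s ^ (μ - 1) * (phi μ (b / s) - phi μ (α / σ)) := by
    rw [← phi_mul_sub_phi_mul hs (div_pos hb hs) (div_pos (by linarith) hσ)]
    congr 2 <;> field_simp
  have hst := rpow_pos_of_pos hs (μ - 1)
  rw [ea, eb]
  calc s ^ (μ - 1) * (α - β) ^ 2 = 2 * σ ^ 2 * s ^ (μ - 1) * (2 * (α / σ - 1 / 2) ^ 2) := by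
        field_simp; ring
    _ ≤ 2 * σ ^ 2 * s ^ (μ - 1) *
        ((1 - α / σ) * (phi μ (1 - b / s) - phi μ (1 - α / σ)) +
          α / σ * (phi μ (b / s) - phi μ (α / σ))) := by gcongr
    _ = _ := by field_simp; ring

end phi

section softmax

variable {ι : Type*} [Fintype ι]

noncomputable def softmax (v : ι → ℝ) (y : ι) : ℝ :=
  exp (v y) / ∑ y', exp (v y')

lemma sum_exp_pos [Nonempty ι] (v : ι → ℝ) : 0 < ∑ y, exp (v y) :=
  Finset.sum_pos (fun _ _ => exp_pos _) Finset.univ_nonempty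

lemma softmax_pos (v : ι → ℝ) (y : ι) : 0 < softmax v y :=
  have : Nonempty ι := ⟨y⟩
  div_pos (exp_pos _) (sum_exp_pos v)

lemma sum_softmax [Nonempty ι] (v : ι → ℝ) : ∑ y, softmax v y = 1 := by
  simp only [softmax]
  rw [← Finset.sum_div, div_self (sum_exp_pos v).ne']

lemma softmax_le_one (v : ι → ℝ) (y : ι) : softmax v y ≤ 1 := by
  have : Nonempty ι := ⟨y⟩
  rw [← sum_softmax v]
  exact Finset.single_le_sum (fun y _ => (softmax_pos v y).le) (Finset.mem_univ y)

lemma softmax_log {q : ι → ℝ} (hq : ∀ y, 0 < q y) (hq1 : ∑ y, q y = 1) :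
    softmax (fun y => log (q y)) = q := by
  funext y
  simp only [softmax, exp_log (hq _), hq1, div_one]

lemma softmax_le_softmax {v : ι → ℝ} {y z : ι} (h : v y ≤ v z) : softmax v y ≤ softmax v z :=
  have : Nonempty ι := ⟨y⟩
  div_le_div_of_nonneg_right (exp_le_exp.mpr h) (sum_exp_pos v).le

lemma inv_card_le_softmax {v : ι → ℝ} {y : ι} (hy : ∀ y', v y' ≤ v y) :
    (Fintype.card ι : ℝ)⁻¹ ≤ softmax v y := by
  have : Nonempty ι := ⟨y⟩
  have hsum : 1 ≤ softmax v y * Fintype.card ι := by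
    calc (1 : ℝ) = ∑ y', softmax v y' := (sum_softmax v).symm
      _ ≤ ∑ _y' : ι, softmax v y := Finset.sum_le_sum fun y' _ => softmax_le_softmax (hy y')
      _ = softmax v y * Fintype.card ι := by
        rw [Finset.sum_const, nsmul_eq_mul, Finset.card_univ, mul_comm]
  rw [inv_le_iff_one_le_mul₀ (by exact_mod_cast Fintype.card_pos)]
  exact hsum

lemma softmax_add_softmax_le_one [DecidableEq ι] (v : ι → ℝ) {y z : ι} (hyz : y ≠ z) :
    softmax v y + softmax v z ≤ 1 := by
  have : Nonempty ι := ⟨y⟩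
  rw [← Finset.sum_pair hyz, ← sum_softmax v]
  exact Finset.sum_le_sum_of_subset_of_nonneg (Finset.subset_univ _)
    fun y _ _ => (softmax_pos v y).le

lemma sum_sub_sum_eq_of_eq_off_pair [DecidableEq ι] {f g : ι → ℝ} {y z : ι} (hyz : y ≠ z)
    (h : ∀ x, x ≠ y → x ≠ z → f x = g x) :
    ∑ x, f x - ∑ x, g x = (f y - g y) + (f z - g z) := by
  rw [← Finset.sum_sub_distrib]
  exact Fintype.sum_eq_add y z hyz fun x hx => sub_eq_zero.mpr (h x hx.1 hx.2)

lemma exists_softmax_eq_update [DecidableEq ι] (v : ι → ℝ) {y z : ι} (hyz : y ≠ z) {a b : ℝ}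
    (ha : 0 < a) (hb : 0 < b) (hab : a + b = softmax v y + softmax v z) :
    ∃ w, softmax w y = a ∧ softmax w z = b ∧ ∀ x, x ≠ y → x ≠ z → softmax w x = softmax v x := by
  have : Nonempty ι := ⟨y⟩
  set q := Function.update (Function.update (softmax v) y a) z b
  have hqy : q y = a := by simp [q, hyz]
  have hqz : q z = b := by simp [q]
  have hqo : ∀ x, x ≠ y → x ≠ z → q x = softmax v x := fun x hxy hxz => by
    simp [q, hxy, hxz]
  have hq : ∀ x, 0 < q x := fun x => by
    by_cases hxy : x = y
    · rw [hxy, hqy]; exact ha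
    by_cases hxz : x = z
    · rw [hxz, hqz]; exact hb
    rw [hqo x hxy hxz]; exact softmax_pos v x
  have hq1 : ∑ x, q x = 1 := by
    have := sum_sub_sum_eq_of_eq_off_pair hyz hqo
    rw [sum_softmax, hqy, hqz] at this
    linarith
  refine ⟨fun x => log (q x), ?_⟩
  rw [softmax_log hq hq1]
  exact ⟨hqy, hqz, hqo⟩

end softmax

lemma ellmu_eq_phi_softmax (m : ℕ) (μ : ℝ) (v : Fin (m + 2) → ℝ) (y : Fin (m + 2)) :
    ellmu m μ v y = phi μ (softmax v y) := by
  have hsum : ∑ y', exp (v y' - v y) = (softmax v y)⁻¹ := by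
    simp only [softmax, inv_div, Finset.sum_div, exp_sub]
  have hs := softmax_pos v y
  rw [ellmu, phi, hsum]
  split_ifs with hμ
  · rw [log_inv]
  · rw [inv_rpow hs.le, ← rpow_neg hs.le, neg_sub]
    field_simp [sub_ne_zero.mpr hμ, sub_ne_zero.mpr (Ne.symm hμ)]
    ring

lemma apply_le_apply_pred (m : ℕ) (v : Fin (m + 2) → ℝ) (y : Fin (m + 2)) :
    v y ≤ v (pred m v) := by
  have hmax : ∀ i : Fin (m + 1), v i.castSucc ≤ classMax m v := fun i =>
    Finset.le_sup' (fun i : Fin (m + 1) => v i.castSucc) (Finset.mem_univ i)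
  unfold pred
  split_ifs with h
  · induction y using Fin.lastCases with
    | last => exact le_rfl
    | cast i => exact (hmax i).trans h
  · generalize_proofs hne
    rw [(Finset.mem_filter.mp (Finset.min'_mem _ hne)).2]
    induction y using Fin.lastCases with
    | last => exact (not_le.mp h).le
    | cast i => exact hmax i

section risk

variable {m : ℕ} {μ c : ℝ} {p : Fin (m + 1) → ℝ}

lemma pext_nonneg (hp0 : ∀ y, 0 ≤ p y) (hc1 : c ≤ 1) (y : Fin (m + 2)) : 0 ≤ pext m c p y := by
  induction y using Fin.lastCases with
  | last => simpa [pext] using hc1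
  | cast i => simpa [pext] using hp0 i

lemma sum_pext (hp1 : ∑ y, p y = 1) : ∑ y, pext m c p y = 2 - c := by
  rw [Fin.sum_univ_castSucc]
  simp only [pext, Fin.snoc_castSucc, Fin.snoc_last, hp1]
  ring

lemma condAbsRisk_sub_iInf_le {y : Fin (m + 2)} (hy : ∀ y', pext m c p y' ≤ pext m c p y)
    (v : Fin (m + 2) → ℝ) :
    condAbsRisk m c p v - ⨅ w, condAbsRisk m c p w ≤ pext m c p y - pext m c p (pred m v) := by
  have : 1 - pext m c p y ≤ ⨅ w, condAbsRisk m c p w :=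
    le_ciInf fun w => by rw [condAbsRisk]; linarith [hy (pred m w)]
  rw [condAbsRisk]
  linarith

lemma condSurRisk_eq_sum_phi_softmax (v : Fin (m + 2) → ℝ) :
    condSurRisk m μ c p v = ∑ y, pext m c p y * phi μ (softmax v y) := by
  simp only [condSurRisk, ellmu_eq_phi_softmax]

lemma condSurRisk_nonneg (hp0 : ∀ y, 0 ≤ p y) (hc1 : c ≤ 1) (v : Fin (m + 2) → ℝ) :
    0 ≤ condSurRisk m μ c p v := by
  rw [condSurRisk_eq_sum_phi_softmax]
  refine Finset.sum_nonneg fun y _ => mul_nonneg (pext_nonneg hp0 hc1 y) ?_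
  have hs := softmax_pos v y
  rw [← phi_one μ]
  exact phi_antitoneOn μ hs (mem_Ioi.mpr one_pos) (softmax_le_one v y)

lemma exists_sq_sub_le_condSurRisk_sub (hμ1 : 1 ≤ μ) (hμ2 : μ ≤ 2) (v : Fin (m + 2) → ℝ)
    {y : Fin (m + 2)} (hy : y ≠ pred m v) {β : ℝ} (hβ0 : 0 < β)
    (hβ : pext m c p (pred m v) ≤ β) (hβα : β ≤ pext m c p y) :
    ∃ w, (pext m c p y - β) ^ 2 ≤ 2 * (pext m c p y + β) * ((m + 2 : ℕ) : ℝ) ^ (μ - 1) *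
      (condSurRisk m μ c p v - condSurRisk m μ c p w +
        (β - pext m c p (pred m v)) * phi μ ((m + 2 : ℕ) : ℝ)⁻¹) := by
  set N : ℝ := ((m + 2 : ℕ) : ℝ)
  set yh := pred m v
  set α := pext m c p y
  set a := softmax v yh
  set b := softmax v y
  have hvyh : ∀ y', v y' ≤ v yh := apply_le_apply_pred m v
  have hN : 0 < N := by positivity
  have hb : 0 < b := softmax_pos v y
  have hba : b ≤ a := softmax_le_softmax (hvyh y)
  have haN : N⁻¹ ≤ a := by simpa [N] using inv_card_le_softmax hvyh
  have hs1 : a + b ≤ 1 := softmax_add_softmax_le_one v (Ne.symm hy)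
  have hσ : 0 < α + β := by linarith
  set a' := (a + b) * β / (α + β)
  set b' := (a + b) * α / (α + β)
  have ha'0 : 0 < a' := div_pos (mul_pos (by linarith) hβ0) hσ
  obtain ⟨w, hwa, hwb, hwo⟩ := exists_softmax_eq_update v (Ne.symm hy) (a := a') (b := b')
    ha'0 (div_pos (mul_pos (by linarith) (by linarith)) hσ)
    (by rw [← add_div, ← mul_add, add_comm β, mul_div_assoc, div_self hσ.ne', mul_one])
  refine ⟨w, ?_⟩
  have hdiff : condSurRisk m μ c p v - condSurRisk m μ c p w =
      pext m c p yh * (phi μ a - phi μ a') + α * (phi μ b - phi μ b') := by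
    rw [condSurRisk_eq_sum_phi_softmax, condSurRisk_eq_sum_phi_softmax,
      sum_sub_sum_eq_of_eq_off_pair (Ne.symm hy) fun x hx1 hx2 => by rw [hwo x hx1 hx2], hwa, hwb]
    ring
  have hphi_le : phi μ a - phi μ a' ≤ phi μ N⁻¹ := by
    have ha' : a' ≤ 1 := by
      rw [div_le_one hσ]
      nlinarith
    have h1 : phi μ a ≤ phi μ N⁻¹ := phi_antitoneOn μ (inv_pos.2 hN) (hb.trans_le hba) haN
    have h2 : phi μ 1 ≤ phi μ a' := phi_antitoneOn μ ha'0 (mem_Ioi.2 one_pos) ha'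
    linarith [phi_one μ]
  have hNs : 1 ≤ N ^ (μ - 1) * (a + b) ^ (μ - 1) := by
    rw [← mul_rpow hN.le (by linarith)]
    refine one_le_rpow ?_ (by linarith)
    rw [← inv_mul_le_iff₀ hN, mul_one]
    linarith
  have hreal := sq_sub_le_phi_reallocation hμ1 hμ2 hb hba hβ0 hβα
  have hNt : 0 ≤ N ^ (μ - 1) := by positivity
  calc (α - β) ^ 2 ≤ N ^ (μ - 1) * ((a + b) ^ (μ - 1) * (α - β) ^ 2) := by
        nlinarith [sq_nonneg (α - β)]
    _ ≤ N ^ (μ - 1) * (2 * (α + β) * (β * (phi μ a - phi μ a') + α * (phi μ b - phi μ b'))) := by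
        gcongr
    _ ≤ _ := by
        rw [hdiff]
        have := mul_le_mul_of_nonneg_left hphi_le (sub_nonneg.2 hβ)
        have : 0 ≤ 2 * (α + β) * N ^ (μ - 1) := by positivity
        nlinarith

lemma sq_sub_le_condSurRisk_sub_iInf (hμ1 : 1 ≤ μ) (hμ2 : μ ≤ 2) (hp0 : ∀ y, 0 ≤ p y)
    (hc1 : c ≤ 1) (v : Fin (m + 2) → ℝ) {y : Fin (m + 2)}
    (hβα : pext m c p (pred m v) < pext m c p y) :
    (pext m c p y - pext m c p (pred m v)) ^ 2 ≤
      2 * (pext m c p y + pext m c p (pred m v)) * ((m + 2 : ℕ) : ℝ) ^ (μ - 1) *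
        (condSurRisk m μ c p v - ⨅ w, condSurRisk m μ c p w) := by
  set α := pext m c p y
  set β := pext m c p (pred m v)
  set N : ℝ := ((m + 2 : ℕ) : ℝ)
  set B := condSurRisk m μ c p v - ⨅ w, condSurRisk m μ c p w
  have hne : y ≠ pred m v := fun h => hβα.ne' (congrArg (pext m c p) h)
  have hβ0 : 0 ≤ β := pext_nonneg hp0 hc1 _
  have hB : ∀ w, condSurRisk m μ c p v - condSurRisk m μ c p w ≤ B := fun w =>
    sub_le_sub_left (ciInf_le ⟨0, forall_mem_range.2 (condSurRisk_nonneg hp0 hc1)⟩ w) _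
  -- The comparator needs a positive weight `β'` (softmax values are positive), hence `β' ↓ β`.
  have hlim : (α - β) ^ 2 ≤ 2 * (α + β) * N ^ (μ - 1) * (B + (β - β) * phi μ N⁻¹) := by
    refine ContinuousWithinAt.closure_le (s := Ioc β α) (f := fun β' => (α - β') ^ 2)
      (g := fun β' => 2 * (α + β') * N ^ (μ - 1) * (B + (β' - β) * phi μ N⁻¹))
      (by rw [closure_Ioc hβα.ne]; exact left_mem_Icc.2 hβα.le)
      (Continuous.continuousWithinAt (by fun_prop))
      (Continuous.continuousWithinAt (by fun_prop)) fun β' hβ' => ?_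
    obtain ⟨w, hw⟩ := exists_sq_sub_le_condSurRisk_sub hμ1 hμ2 v hne
      (by linarith [hβ'.1]) hβ'.1.le hβ'.2
    have : 0 < α + β' := by linarith [hβ'.1]
    exact hw.trans (mul_le_mul_of_nonneg_left (by linarith [hB w]) (by positivity))
  rwa [sub_self, zero_mul, add_zero] at hlim

end risk

theorem stmt_3_general (m : ℕ) (c : ℝ) (hc : c ∈ Set.Ioo (0 : ℝ) 1)
    (μ : ℝ) (hμ : μ ∈ Set.Ico (1 : ℝ) 2)
    (p : Fin (m + 1) → ℝ) (hp0 : ∀ y, 0 ≤ p y) (hp1 : ∑ y, p y = 1)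
    (v : Fin (m + 2) → ℝ) :
    condAbsRisk m c p v - ⨅ w, condAbsRisk m c p w
      ≤ Real.sqrt (2 * (2 - c) * ((m + 2 : ℕ) : ℝ) ^ (μ - 1) *
          (condSurRisk m μ c p v - ⨅ w, condSurRisk m μ c p w)) := by
  obtain ⟨-, hc1⟩ := hc
  obtain ⟨hμ1, hμ2⟩ := hμ
  obtain ⟨y, -, hy⟩ := Finset.exists_max_image Finset.univ (pext m c p) Finset.univ_nonempty
  refine (condAbsRisk_sub_iInf_le (fun y' => hy y' (Finset.mem_univ y')) v).trans ?_
  rcases le_or_gt (pext m c p y) (pext m c p (pred m v)) with hαβ | hβα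
  · exact (sub_nonpos.2 hαβ).trans (sqrt_nonneg _)
  have hne : y ≠ pred m v := fun h => hβα.ne' (congrArg (pext m c p) h)
  have hsum : pext m c p y + pext m c p (pred m v) ≤ 2 - c := by
    rw [← sum_pext hp1, ← Finset.sum_pair hne]
    exact Finset.sum_le_sum_of_subset_of_nonneg (Finset.subset_univ _)
      fun y _ _ => pext_nonneg hp0 hc1.le y
  have hB0 : 0 ≤ condSurRisk m μ c p v - ⨅ w, condSurRisk m μ c p w :=
    sub_nonneg.2 (ciInf_le ⟨0, forall_mem_range.2 (condSurRisk_nonneg hp0 hc1.le)⟩ v)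
  rw [← sqrt_sq (sub_nonneg.2 hβα.le)]
  refine sqrt_le_sqrt ((sq_sub_le_condSurRisk_sub_iInf hμ1 hμ2.le hp0 hc1.le v hβα).trans ?_)
  gcongr

/-- **Theorem (H-consistency bound for cross-entropy score-based surrogates, conditional
form, case `μ ∈ [1,2)`).** The abstention calibration gap is bounded by
`sqrt(2 · (2-c) · (n+1)^(μ-1) · ΔC_μ(v,p))`, where `n + 1 = m + 2` and the calibration gaps
are taken over all score vectors (symmetric and complete hypothesis set). -/
theorem stmt_3 (m : ℕ) (hm : 1 ≤ m) (c : ℝ) (hc : c ∈ Set.Ioo (0 : ℝ) 1)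
    (μ : ℝ) (hμ : μ ∈ Set.Ico (1 : ℝ) 2)
    (p : Fin (m + 1) → ℝ) (hp0 : ∀ y, 0 ≤ p y) (hp1 : ∑ y, p y = 1)
    (v : Fin (m + 2) → ℝ) :
    condAbsRisk m c p v - ⨅ w, condAbsRisk m c p w
      ≤ Real.sqrt (2 * (2 - c) * ((m + 2 : ℕ) : ℝ) ^ (μ - 1) *
          (condSurRisk m μ c p v - ⨅ w, condSurRisk m μ c p w)) :=
  stmt_3_general m c hc μ hμ p hp0 hp1 v
end

section
/- Lemma (power-mean excess inequality for μ ∈ (1,2)). Let c ∈ (0,1), μ ∈ (1,2), and let a, b ≥ 0 satisfy a + b ≤ 2 − c. Then ( (a^{1/(2−μ)} + b^{1/(2−μ)})/2 )^{2−μ} − (a + b)/2 ≥ (μ − 1)·(a − b)² / ( 4·(2 − c) ). -/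
/-!
Put `r = 1/(2-μ) ≥ 1` and write `a = m(1+t)`, `b = m(1-t)` with `m = (a+b)/2` and `|t| ≤ 1`.
Since `(1+t)^r/2 + (1-t)^r/2 = Σ w_i exp((r-1) log x_i)` with weights `w_i = x_i/2`, `x_i = 1 ± t`,
Jensen's inequality for `exp` bounds it below by `exp((r-1) t²/2)`: the exponent is `(r-1)/2` times
`(1+t) log(1+t) + (1-t) log(1-t) ≥ t²`, which is Pinsker's inequality for a coin. Taking `r`-th
roots and using `exp x ≥ 1 + x` gives `((a^r + b^r)/2)^(1/r) ≥ m (1 + (1 - 1/r) t²/2)`, i.e.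
the power mean exceeds the arithmetic mean by at least `(μ-1)(a-b)²/(4(a+b))`; finally
`a + b ≤ 2 - c`.
-/

open Real

theorem Real.two_mul_le_log_one_add_sub_log_one_sub {t : ℝ} (ht₀ : 0 ≤ t) (ht₁ : t < 1) :
    2 * t ≤ log (1 + t) - log (1 - t) := by
  have hsum := hasSum_log_sub_log_of_abs_lt_one (abs_lt.2 ⟨by linarith, ht₁⟩)
  simpa using le_hasSum hsum 0 fun k _ ↦ by positivity

theorem Real.sq_le_mul_log_one_add_add_mul_log_one_sub_of_nonneg {t : ℝ} (ht₀ : 0 ≤ t)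
    (ht₁ : t ≤ 1) : t ^ 2 ≤ (1 + t) * log (1 + t) + (1 - t) * log (1 - t) := by
  let f : ℝ → ℝ := fun s ↦ (1 + s) * log (1 + s) + (1 - s) * log (1 - s) - s ^ 2
  have hmono : MonotoneOn f (Set.Icc 0 1) := by
    refine monotoneOn_of_hasDerivWithinAt_nonneg (convex_Icc 0 1)
      (f' := fun s ↦ log (1 + s) - log (1 - s) - 2 * s) (by fun_prop) (fun s hs ↦ ?_) fun s hs ↦ ?_
    all_goals rw [interior_Icc] at hs
    · have h₁ := (hasDerivAt_mul_log (x := 1 + s) (by linarith [hs.1])).comp s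
        ((hasDerivAt_id s).const_add 1)
      have h₂ := (hasDerivAt_mul_log (x := 1 - s) (by linarith [hs.2])).comp s
        ((hasDerivAt_id s).const_sub 1)
      exact (((h₁.add h₂).sub (hasDerivAt_pow 2 s)).congr_deriv (by push_cast; ring))
        |>.hasDerivWithinAt
    · linarith [two_mul_le_log_one_add_sub_log_one_sub hs.1.le hs.2]
  simpa [f] using hmono ⟨le_rfl, zero_le_one⟩ ⟨ht₀, ht₁⟩ ht₀

theorem Real.sq_le_mul_log_one_add_add_mul_log_one_sub {t : ℝ} (ht : |t| ≤ 1) :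
    t ^ 2 ≤ (1 + t) * log (1 + t) + (1 - t) * log (1 - t) := by
  rcases le_total 0 t with ht₀ | ht₀
  · exact sq_le_mul_log_one_add_add_mul_log_one_sub_of_nonneg ht₀ (le_of_abs_le ht)
  · have h := sq_le_mul_log_one_add_add_mul_log_one_sub_of_nonneg (neg_nonneg.2 ht₀)
      (by linarith [neg_abs_le t])
    rw [neg_sq, sub_neg_eq_add, ← sub_eq_add_neg] at h
    linarith

theorem Real.mul_exp_sub_one_mul_log {x r : ℝ} (hx : 0 ≤ x) (hr : r ≠ 0) :
    x * exp ((r - 1) * log x) = x ^ r := by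
  rcases hx.eq_or_lt with rfl | hx
  · simp [zero_rpow hr]
  · rw [mul_comm (r - 1), ← rpow_def_of_pos hx, rpow_sub_one hx.ne']
    field_simp

theorem Real.exp_le_rpow_mean_one_add_one_sub {r t : ℝ} (hr : 1 ≤ r) (ht : |t| ≤ 1) :
    exp ((r - 1) * (t ^ 2 / 2)) ≤ ((1 + t) ^ r + (1 - t) ^ r) / 2 := by
  obtain ⟨ht₁, ht₂⟩ := abs_le.1 ht
  have hjensen := convexOn_exp.2 (Set.mem_univ ((r - 1) * log (1 + t)))
    (Set.mem_univ ((r - 1) * log (1 - t))) (show 0 ≤ (1 + t) / 2 by linarith)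
    (show 0 ≤ (1 - t) / 2 by linarith) (by ring)
  simp only [smul_eq_mul] at hjensen
  calc exp ((r - 1) * (t ^ 2 / 2))
      ≤ exp ((1 + t) / 2 * ((r - 1) * log (1 + t)) + (1 - t) / 2 * ((r - 1) * log (1 - t))) := by
        gcongr
        nlinarith [sq_le_mul_log_one_add_add_mul_log_one_sub ht]
    _ ≤ _ := hjensen
    _ = ((1 + t) ^ r + (1 - t) ^ r) / 2 := by
        rw [div_mul_eq_mul_div, div_mul_eq_mul_div,
          mul_exp_sub_one_mul_log (by linarith) (by linarith),
          mul_exp_sub_one_mul_log (by linarith) (by linarith), add_div]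

theorem Real.one_add_le_rpow_mean_one_add_one_sub {p t : ℝ} (hp₀ : 0 < p) (hp₁ : p ≤ 1)
    (ht : |t| ≤ 1) :
    1 + (1 - p) * (t ^ 2 / 2) ≤ (((1 + t) ^ (1 / p) + (1 - t) ^ (1 / p)) / 2) ^ p :=
  calc 1 + (1 - p) * (t ^ 2 / 2)
      ≤ exp ((1 - p) * (t ^ 2 / 2)) := by linarith [add_one_le_exp ((1 - p) * (t ^ 2 / 2))]
    _ = exp ((1 / p - 1) * (t ^ 2 / 2)) ^ p := by
        rw [← exp_mul]
        field_simp
    _ ≤ _ := rpow_le_rpow (exp_pos _).le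
        (exp_le_rpow_mean_one_add_one_sub (one_le_one_div hp₀ hp₁) ht) hp₀.le

theorem Real.arith_mean_add_sq_sub_div_le_rpow_mean {p a b : ℝ} (hp₀ : 0 < p) (hp₁ : p ≤ 1)
    (ha : 0 ≤ a) (hb : 0 ≤ b) :
    (a + b) / 2 + (1 - p) * (a - b) ^ 2 / (4 * (a + b)) ≤
      ((a ^ (1 / p) + b ^ (1 / p)) / 2) ^ p := by
  rcases (add_nonneg ha hb).eq_or_lt with hs | hs
  · obtain ⟨rfl, rfl⟩ : a = 0 ∧ b = 0 := ⟨by linarith, by linarith⟩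
    simp [zero_rpow hp₀.ne', zero_rpow (inv_pos.2 hp₀).ne']
  set m := (a + b) / 2
  set t := (a - b) / (a + b)
  have hm : 0 < m := by positivity
  have ht : |t| ≤ 1 := by
    rw [abs_div, abs_of_pos hs, div_le_one hs, abs_le]
    constructor <;> linarith
  have ha' : a = m * (1 + t) := by simp only [m, t]; field_simp; ring
  have hb' : b = m * (1 - t) := by simp only [m, t]; field_simp; ring
  have hmean : ((a ^ (1 / p) + b ^ (1 / p)) / 2) ^ p =
      m * (((1 + t) ^ (1 / p) + (1 - t) ^ (1 / p)) / 2) ^ p := by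
    obtain ⟨ht₁, ht₂⟩ := abs_le.1 ht
    have h₁ : 0 ≤ 1 + t := by linarith
    have h₂ : 0 ≤ 1 - t := by linarith
    rw [ha', hb', mul_rpow hm.le h₁, mul_rpow hm.le h₂, ← mul_add, mul_div_assoc,
      mul_rpow (by positivity) (by positivity), ← rpow_mul hm.le, one_div_mul_cancel hp₀.ne',
      rpow_one]
  have hexcess : (1 - p) * (a - b) ^ 2 / (4 * (a + b)) = m * ((1 - p) * (t ^ 2 / 2)) := by
    simp only [m, t]
    field_simp
    ring
  rw [hmean, hexcess]
  nlinarith [one_add_le_rpow_mean_one_add_one_sub hp₀ hp₁ ht]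

theorem stmt_13_general (c μ a b : ℝ) (hμ : μ ∈ Set.Ioo (1 : ℝ) 2)
    (ha : 0 ≤ a) (hb : 0 ≤ b) (hab : a + b ≤ 2 - c) :
    (μ - 1) * (a - b) ^ 2 / (4 * (2 - c))
      ≤ ((a ^ (1 / (2 - μ)) + b ^ (1 / (2 - μ))) / 2) ^ (2 - μ) - (a + b) / 2 := by
  obtain ⟨hμ₁, hμ₂⟩ := hμ
  have hmean := arith_mean_add_sq_sub_div_le_rpow_mean (p := 2 - μ) (by linarith) (by linarith)
    ha hb
  rw [show 1 - (2 - μ) = μ - 1 by ring] at hmean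
  suffices (μ - 1) * (a - b) ^ 2 / (4 * (2 - c)) ≤ (μ - 1) * (a - b) ^ 2 / (4 * (a + b)) by
    linarith
  rcases (add_nonneg ha hb).eq_or_lt with hs | hs
  · obtain ⟨rfl, rfl⟩ : a = 0 ∧ b = 0 := ⟨by linarith, by linarith⟩
    simp
  · exact div_le_div_of_nonneg_left (mul_nonneg (by linarith) (sq_nonneg _)) (by positivity)
      (by linarith)

/-- **Lemma (power-mean excess inequality for `μ ∈ (1,2)`).**
For `c ∈ (0,1)`, `μ ∈ (1,2)` and `a, b ≥ 0` with `a + b ≤ 2 - c`,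
`((a^(1/(2-μ)) + b^(1/(2-μ)))/2)^(2-μ) - (a+b)/2 ≥ (μ-1)(a-b)² / (4(2-c))`. -/
theorem stmt_13 (c μ a b : ℝ) (hc : c ∈ Set.Ioo (0 : ℝ) 1) (hμ : μ ∈ Set.Ioo (1 : ℝ) 2)
    (ha : 0 ≤ a) (hb : 0 ≤ b) (hab : a + b ≤ 2 - c) :
    (μ - 1) * (a - b) ^ 2 / (4 * (2 - c))
      ≤ ((a ^ (1 / (2 - μ)) + b ^ (1 / (2 - μ))) / 2) ^ (2 - μ) - (a + b) / 2 :=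
  stmt_13_general c μ a b hμ ha hb hab
end

section
/- Proposition (pointwise minimal exponential-loss risk for a bounded hypothesis set). Let Λ > 0 and η ∈ [0,1], with the convention |log(η/(1−η))| = +∞ when η ∈ {0,1}. Then the minimum over t ∈ [−Λ, Λ] of η·e^{−t} + (1 − η)·e^{t} equals max{η, 1−η}·e^{−Λ} + min{η, 1−η}·e^{Λ} when Λ < (1/2)·|log(η/(1−η))|, and equals 2·sqrt(η(1−η)) otherwise. -/
/-!
The risk `η e^{-t} + (1-η) e^t` is unchanged under `(η, t) ↦ (1-η, -t)`, and so is the claimed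
value, so we may take `η ≥ 1/2`. The product of the two summands is `η(1-η)`, so by AM–GM the
risk is at least `2√(η(1-η))`, with equality at `t* = ½ log(η/(1-η)) ≥ 0`. If `t* ≤ Λ` this
point is admissible. Otherwise the risk is decreasing on `[-Λ, Λ] ⊆ (-∞, t*]`, since
`r(s) - r(t) = (e^t - e^s)(η - (1-η)e^{s+t})e^{-(s+t)}`, and the minimum is attained at `t = Λ`.
-/

open Real Set

noncomputable def expRisk (η t : ℝ) : ℝ := η * exp (-t) + (1 - η) * exp t

noncomputable def minExpRisk (Λ η : ℝ) : ℝ :=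
  if η = 0 ∨ η = 1 ∨ Λ < |log (η / (1 - η))| / 2
  then max η (1 - η) * exp (-Λ) + min η (1 - η) * exp Λ
  else 2 * √(η * (1 - η))

lemma expRisk_one_sub (η t : ℝ) : expRisk (1 - η) t = expRisk η (-t) := by
  simp only [expRisk, neg_neg, sub_sub_cancel]
  ring

lemma image_expRisk_one_sub (η Λ : ℝ) :
    expRisk (1 - η) '' Icc (-Λ) Λ = expRisk η '' Icc (-Λ) Λ := by
  have : expRisk (1 - η) = expRisk η ∘ Neg.neg := funext (expRisk_one_sub η)
  rw [this, image_comp, image_neg_Icc, neg_neg]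

lemma minExpRisk_one_sub (Λ η : ℝ) : minExpRisk Λ (1 - η) = minExpRisk Λ η := by
  have hlog : |log ((1 - η) / η)| = |log (η / (1 - η))| := by
    rw [← inv_div, log_inv, abs_neg]
  simp only [minExpRisk, sub_sub_cancel, sub_eq_zero, sub_eq_self, hlog, max_comm η, min_comm η,
    mul_comm η]
  grind

lemma two_sqrt_le_expRisk {η : ℝ} (hη₀ : 0 ≤ η) (hη₁ : η ≤ 1) (t : ℝ) :
    2 * √(η * (1 - η)) ≤ expRisk η t := by
  have hprod : η * exp (-t) * ((1 - η) * exp t) = η * (1 - η) := by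
    rw [exp_neg]; field_simp
  have hsq := sq_sqrt (mul_nonneg hη₀ (sub_nonneg.2 hη₁))
  refine le_of_pow_le_pow_left₀ two_ne_zero (by unfold expRisk; positivity) ?_
  calc (2 * √(η * (1 - η))) ^ 2 = 4 * (η * exp (-t)) * ((1 - η) * exp t) := by
        rw [mul_pow, hsq, mul_assoc 4, hprod]; ring
    _ ≤ expRisk η t ^ 2 := four_mul_le_sq_add _ _

lemma expRisk_log_div_two {η : ℝ} (hη₀ : 0 < η) (hη₁ : η < 1) :
    expRisk η (log (η / (1 - η)) / 2) = 2 * √(η * (1 - η)) := by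
  have h1η : 0 < 1 - η := sub_pos.2 hη₁
  rw [expRisk, exp_neg, exp_half, exp_log (div_pos hη₀ h1η), sqrt_div hη₀.le, sqrt_mul hη₀.le]
  have := sq_sqrt hη₀.le
  have := sq_sqrt h1η.le
  have := sqrt_pos.2 hη₀
  have := sqrt_pos.2 h1η
  field_simp
  nlinarith

lemma expRisk_le_of_le {η s t : ℝ} (hst : s ≤ t) (h : (1 - η) * exp (s + t) ≤ η) :
    expRisk η t ≤ expRisk η s := by
  have key : expRisk η s - expRisk η t =
      (exp t - exp s) * (η - (1 - η) * exp (s + t)) * exp (-(s + t)) := by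
    simp only [expRisk, exp_neg, exp_add]
    field_simp
    ring
  have : 0 ≤ exp t - exp s := sub_nonneg.2 (exp_le_exp.2 hst)
  nlinarith [mul_nonneg (mul_nonneg this (sub_nonneg.2 h)) (exp_pos (-(s + t))).le]

lemma isLeast_expRisk_right {Λ η : ℝ} (hΛ : 0 ≤ Λ) (hη : η ≤ 1)
    (h : (1 - η) * exp (2 * Λ) ≤ η) :
    IsLeast (expRisk η '' Icc (-Λ) Λ) (expRisk η Λ) := by
  refine ⟨mem_image_of_mem _ ⟨by linarith, le_rfl⟩, forall_mem_image.2 fun t ht => ?_⟩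
  refine expRisk_le_of_le ht.2 (le_trans ?_ h)
  gcongr
  linarith [ht.2]

lemma isLeast_expRisk_log_div_two {Λ η : ℝ} (hη₀ : 0 < η) (hη₁ : η < 1)
    (hΛ : |log (η / (1 - η))| / 2 ≤ Λ) :
    IsLeast (expRisk η '' Icc (-Λ) Λ) (2 * √(η * (1 - η))) := by
  have hmem : log (η / (1 - η)) / 2 ∈ Icc (-Λ) Λ := by
    obtain ⟨hl, hr⟩ := abs_le.1 (by linarith : |log (η / (1 - η))| ≤ 2 * Λ)
    constructor <;> linarith
  refine ⟨⟨_, hmem, expRisk_log_div_two hη₀ hη₁⟩, forall_mem_image.2 fun t _ => ?_⟩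
  exact two_sqrt_le_expRisk hη₀.le hη₁.le t

lemma sInf_expRisk_of_half_le {Λ η : ℝ} (hΛ : 0 ≤ Λ) (hη₀ : 1 / 2 ≤ η) (hη₁ : η ≤ 1) :
    sInf (expRisk η '' Icc (-Λ) Λ) = minExpRisk Λ η := by
  rw [minExpRisk, max_eq_left (by linarith), min_eq_right (by linarith)]
  split_ifs with hc
  · refine (isLeast_expRisk_right hΛ hη₁ ?_).csInf_eq
    rcases hη₁.eq_or_lt with rfl | hlt
    · simp
    have h1η : 0 < 1 - η := sub_pos.2 hlt
    have hratio : 1 ≤ η / (1 - η) := (one_le_div h1η).2 (by linarith)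
    have h2Λ : 2 * Λ ≤ log (η / (1 - η)) := by
      rcases hc with h | h | h
      · linarith
      · linarith
      · rw [abs_of_nonneg (log_nonneg hratio)] at h; linarith
    rwa [← le_div_iff₀' h1η, ← le_log_iff_exp_le (by linarith)]
  · push Not at hc
    exact (isLeast_expRisk_log_div_two (by linarith) (lt_of_le_of_ne hη₁ hc.2.1) hc.2.2).csInf_eq

/-- **Proposition (pointwise minimal exponential-loss risk for a bounded hypothesis set).**
For `Λ > 0` and `η ∈ [0,1]`, the minimum over `t ∈ [-Λ, Λ]` of `η e^{-t} + (1-η) e^{t}`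
equals `max{η, 1-η} e^{-Λ} + min{η, 1-η} e^{Λ}` when `Λ < (1/2)|log(η/(1-η))|` (with the
convention that `|log(η/(1-η))| = +∞` when `η ∈ {0,1}`, so that the first branch applies
there), and equals `2 √(η(1-η))` otherwise. -/
theorem stmt_15 (Λ η : ℝ) (hΛ : 0 < Λ) (hη : η ∈ Set.Icc (0 : ℝ) 1) :
    sInf ((fun t => η * Real.exp (-t) + (1 - η) * Real.exp t) '' Set.Icc (-Λ) Λ)
      = if η = 0 ∨ η = 1 ∨ Λ < |Real.log (η / (1 - η))| / 2
        then max η (1 - η) * Real.exp (-Λ) + min η (1 - η) * Real.exp Λ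
        else 2 * Real.sqrt (η * (1 - η)) := by
  show sInf (expRisk η '' Icc (-Λ) Λ) = minExpRisk Λ η
  obtain ⟨hη₀, hη₁⟩ := hη
  rcases le_total (1 / 2) η with hη | hη
  · exact sInf_expRisk_of_half_le hΛ.le hη hη₁
  · rw [← image_expRisk_one_sub, ← minExpRisk_one_sub]
    exact sInf_expRisk_of_half_le hΛ.le (by linarith) (by linarith)
end

section
/- Proposition (strict gap between approximation error and minimizability gap for the exponential loss). Let Λ > 0 and η ∈ {0, 1}. Then inf_{t ∈ [−Λ, Λ]} ( η·e^{−t} + (1 − η)·e^{t} ) − inf_{t ∈ ℝ} ( η·e^{−t} + (1 − η)·e^{t} ) = e^{−Λ}. Consequently, for a deterministic distribution and the Λ-bounded symmetric hypothesis set, the pointwise difference between the best-in-class conditional exponential-loss risk and the conditional risk over all measurable functions equals e^{−Λ} at every point, so the approximation error exceeds the minimizability gap by e^{−Λ}. -/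
/-! For `η ∈ {0, 1}` the conditional risk is `e^t` or `e^{-t}`. Being monotone, it attains its
infimum over `[-Λ, Λ]` at an endpoint, with value `e^{-Λ}`, whereas its infimum over `ℝ` is `0`. -/

open Real Set

theorem Real.iInf_exp : ⨅ t : ℝ, exp t = 0 := by
  rw [iInf, range_exp, csInf_Ioi]

theorem Real.iInf_exp_neg : ⨅ t : ℝ, exp (-t) = 0 := by
  rw [← iInf_exp]
  exact neg_surjective.iInf_comp exp

/-- **Proposition (strict gap between approximation error and minimizability gap for the
exponential loss).** For `Λ > 0` and `η ∈ {0,1}`, the infimum over `t ∈ [-Λ, Λ]` of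
`η e^{-t} + (1-η) e^{t}` exceeds the infimum over all `t ∈ ℝ` by exactly `e^{-Λ}`. -/
theorem stmt_16 (Λ η : ℝ) (hΛ : 0 < Λ) (hη : η = 0 ∨ η = 1) :
    sInf ((fun t => η * Real.exp (-t) + (1 - η) * Real.exp t) '' Set.Icc (-Λ) Λ)
        - (⨅ t : ℝ, η * Real.exp (-t) + (1 - η) * Real.exp t)
      = Real.exp (-Λ) := by
  have hΛ' : -Λ ≤ Λ := by linarith
  rcases hη with rfl | rfl
  · simp only [zero_mul, zero_add, sub_zero, one_mul]
    rw [(exp_monotone.monotoneOn _).sInf_image_Icc hΛ', iInf_exp, sub_zero]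
  · simp only [sub_self, zero_mul, add_zero, one_mul]
    have exp_neg_antitone : Antitone fun t : ℝ => exp (-t) :=
      fun _ _ h ↦ exp_le_exp.2 (neg_le_neg h)
    rw [(exp_neg_antitone.antitoneOn _).sInf_image_Icc hΛ', iInf_exp_neg, sub_zero]
end
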